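/- arXiv:2510.23593 — 3 statements merged into one kernel-verified Lean document; each statement's English description precedes it below -/
import Mathlib

section
/- Let S₁, S₂, S₃ : Finset (Fin n) and let x, y : X satisfy D(x,y) = S₃. Then there exists z : X with D(x,z) = S₁ and D(z,y) = S₂ if and only if S₁ △ S₂ ⊆ S₃ and S₃ ⊆ (S₁ △ S₂) ∪ (S₁ ∩ S₂)°. (Equivalently: the intersection number p_{S₁,S₂}^{S₃} of the factorial scheme is nonzero precisely when S₁ △ S₂ ⊆ S₃ ⊆ (S₁ △ S₂) ∪ (S₁ ∩ S₂)°.) -/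
open Matrix Finset
open scoped Classical

noncomputable section

variable {n : ℕ}

/-- The disagreement set of two tuples. -/
def dis {U : Fin n → Type} [∀ i, DecidableEq (U i)] (x y : ∀ i, U i) : Finset (Fin n) :=
  Finset.univ.filter fun i => x i ≠ y i

/-- `S° = {i ∈ S | 2 < |U i|}`. -/
def circ (U : Fin n → Type) [∀ i, Fintype (U i)] (S : Finset (Fin n)) : Finset (Fin n) :=
  S.filter fun i => 2 < Fintype.card (U i)

/-- The valency `k_S`. -/
def val (U : Fin n → Type) [∀ i, Fintype (U i)] (S : Finset (Fin n)) : ℕ :=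
  ∏ i ∈ S, (Fintype.card (U i) - 1)

variable (U : Fin n → Type) [∀ i, Fintype (U i)] [∀ i, DecidableEq (U i)]

lemma exists_ne_ne {α : Type} [Fintype α] [DecidableEq α] (h : 2 < Fintype.card α)
    (b c : α) : ∃ a : α, a ≠ b ∧ a ≠ c := by
  by_contra hc
  push_neg at hc
  have hsub : (Finset.univ : Finset α) ⊆ {b, c} := by
    intro a _
    rcases eq_or_ne a b with rfl | hab
    · simp
    · simp [hc a hab]
  have := Finset.card_le_card hsub
  have h2 : ({b, c} : Finset α).card ≤ 2 := Finset.card_insert_le b {c} |>.trans (by simp)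
  simp [Finset.card_univ] at this
  omega

/-- For the factorial scheme (direct product of trivial schemes on the `U i`),
the intersection number `p_{S₁,S₂}^{S₃}` is nonzero — i.e. for `x, y` with `D(x,y) = S₃` there is
`z` with `D(x,z) = S₁` and `D(z,y) = S₂` — iff `S₁ △ S₂ ⊆ S₃ ⊆ (S₁ △ S₂) ∪ (S₁ ∩ S₂)°`. -/
theorem stmt0 (hn : 1 ≤ n) (hU : ∀ i, 2 ≤ Fintype.card (U i))
    (S₁ S₂ S₃ : Finset (Fin n)) (x y : ∀ i, U i) (hxy : dis x y = S₃) :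
    (∃ z : ∀ i, U i, dis x z = S₁ ∧ dis z y = S₂) ↔
      (symmDiff S₁ S₂ ⊆ S₃ ∧ S₃ ⊆ symmDiff S₁ S₂ ∪ circ U (S₁ ∩ S₂)) := by
  have h3 : ∀ i, i ∈ S₃ ↔ x i ≠ y i := by
    intro i; rw [← hxy]; simp [dis]
  constructor
  · rintro ⟨z, hz1, hz2⟩
    have h1 : ∀ i, i ∈ S₁ ↔ x i ≠ z i := by
      intro i; rw [← hz1]; simp [dis]
    have h2 : ∀ i, i ∈ S₂ ↔ z i ≠ y i := by
      intro i; rw [← hz2]; simp [dis]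
    constructor
    · intro i hi
      rw [Finset.mem_symmDiff] at hi
      rw [h3]
      rcases hi with ⟨ha, hb⟩ | ⟨ha, hb⟩
      · rw [h1] at ha; rw [h2] at hb; push_neg at hb
        intro h; exact ha (h.trans hb.symm)
      · rw [h2] at ha; rw [h1] at hb; push_neg at hb
        intro h; exact ha (hb ▸ h)
    · intro i hi
      rw [h3] at hi
      rw [Finset.mem_union, Finset.mem_symmDiff]
      by_cases ha : i ∈ S₁ <;> by_cases hb : i ∈ S₂
      · right
        rw [h1] at ha; rw [h2] at hb
        refine Finset.mem_filter.mpr ⟨Finset.mem_inter.mpr ⟨(h1 i).mpr ha, (h2 i).mpr hb⟩, ?_⟩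
        by_contra hcard
        push_neg at hcard
        have hc2 : Fintype.card (U i) = 2 := le_antisymm hcard (hU i)
        -- x i, y i, z i distinct: three distinct elements in card-2 type
        have : ({x i, y i, z i} : Finset (U i)).card = 3 := by
          rw [Finset.card_insert_of_notMem (by simp [hi, ha]),
            Finset.card_insert_of_notMem (by simp [Ne.symm hb]), Finset.card_singleton]
        have := Finset.card_le_card (Finset.subset_univ ({x i, y i, z i} : Finset (U i)))
        simp_all [Finset.card_univ]
      · left; left; exact ⟨ha, hb⟩
      · left; right; exact ⟨hb, ha⟩
      · exfalso
        rw [h1] at ha; rw [h2] at hb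
        push_neg at ha hb
        exact hi (ha.trans hb)
  · rintro ⟨hA, hB⟩
    have key : ∀ i, ∃ a : U i, (x i ≠ a ↔ i ∈ S₁) ∧ (a ≠ y i ↔ i ∈ S₂) := by
      intro i
      by_cases ha : i ∈ S₁ <;> by_cases hb : i ∈ S₂
      · -- i ∈ S₁ ∩ S₂ : need a ≠ x i, a ≠ y i
        have hcard : 2 < Fintype.card (U i) ∨ x i = y i := by
          by_cases hxyi : x i = y i
          · right; exact hxyi
          · left
            have hi3 : i ∈ S₃ := (h3 i).mpr hxyi
            have := hB hi3
            rw [Finset.mem_union, Finset.mem_symmDiff] at this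
            rcases this with (⟨_, h⟩ | ⟨_, h⟩) | h
            · exact absurd hb h
            · exact absurd ha h
            · exact (Finset.mem_filter.mp h).2
        rcases hcard with hcard | hxyi
        · obtain ⟨a, h1, h2⟩ := exists_ne_ne hcard (x i) (y i)
          exact ⟨a, by simp [ha, h1.symm], by simp [hb, h2]⟩
        · obtain ⟨a, h1⟩ := Fintype.exists_ne_of_one_lt_card (by have := hU i; omega : 1 < Fintype.card (U i)) (x i)
          exact ⟨a, by simp [ha, h1.symm], by simp [hb, ← hxyi, h1]⟩
      · -- i ∈ S₁ \ S₂ : take a = y i, need x i ≠ y i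
        have hxyi : x i ≠ y i := (h3 i).mp (hA (Finset.mem_symmDiff.mpr (Or.inl ⟨ha, hb⟩)))
        exact ⟨y i, by simp [ha, hxyi], by simp [hb]⟩
      · -- i ∈ S₂ \ S₁ : take a = x i
        have hxyi : x i ≠ y i := (h3 i).mp (hA (Finset.mem_symmDiff.mpr (Or.inr ⟨hb, ha⟩)))
        exact ⟨x i, by simp [ha], by simp [hb, hxyi]⟩
      · -- i ∉ S₁ ∪ S₂ : then i ∉ S₃ so x i = y i; take a = x i
        have hxyi : x i = y i := by
          by_contra hne
          have := hB ((h3 i).mpr hne)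
          rw [Finset.mem_union, Finset.mem_symmDiff] at this
          rcases this with (⟨h, _⟩ | ⟨h, _⟩) | h
          · exact ha h
          · exact hb h
          · exact ha (Finset.mem_inter.mp (Finset.mem_filter.mp h).1).1
        exact ⟨x i, by simp [ha], by simp [hb, hxyi]⟩
    choose z hz using key
    refine ⟨z, ?_, ?_⟩
    · ext i; simp [dis, (hz i).1]
    · ext i; simp [dis, (hz i).2]

end
end

section
/- The family of matrices E_a * A_b * E_c, indexed by the triples (a,b,c) ∈ P, is an F-basis of the Terwilliger F-algebra T (a basis of T as an F-submodule of Matrix X X F), and the cardinality of P equals 2^(2·n₁) · 5^(n₂); in particular the F-dimension of T is 2^(2·n₁) · 5^(n₂). -/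
/-!
Every matrix of `T` is fixed by conjugation with the coordinatewise permutations of `X` fixing
`x₀`, and two pairs `(x, y)`, `(x', y')` lie in one orbit of this group exactly when their triples
`(D(x₀,x), D(x,y), D(x₀,y))` agree, since permutations of each `U i` can be chosen independently.
The matrix `E_a A_b E_c` is the indicator of the pairs with triple `(a, b, c)`, so these
indicators, for the triples that occur, span `T` and are linearly independent. A triple occurs iff
it lies in `P`, coordinate by coordinate: `(x₀ i, x i, y i)` has one of four equality patterns, or
five when `U i` has a third element, which also gives `|P| = 4 ^ n₁ * 5 ^ n₂`.
-/

open Matrix Finset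
open scoped Classical

set_option synthInstance.maxHeartbeats 1000000
set_option maxHeartbeats 2000000

noncomputable section

variable {n : ℕ}

variable (U : Fin n → Type) [∀ i, Fintype (U i)] [∀ i, DecidableEq (U i)]
variable (F : Type) [Field F]

/-- The adjacency matrix `A_S`. -/
def Amat (S : Finset (Fin n)) : Matrix (∀ i, U i) (∀ i, U i) F :=
  Matrix.of fun x y => if dis x y = S then 1 else 0

/-- The dual idempotent `E_S^*(x₀)`. -/
def Emat (x₀ : ∀ i, U i) (S : Finset (Fin n)) : Matrix (∀ i, U i) (∀ i, U i) F :=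
  Matrix.diagonal fun y => if dis x₀ y = S then 1 else 0

/-- The Terwilliger `F`-algebra of the factorial scheme with respect to the base point `x₀`:
the subalgebra of `Matrix X X F` generated by the adjacency matrices and dual idempotents. -/
def Tw (x₀ : ∀ i, U i) : Subalgebra F (Matrix (∀ i, U i) (∀ i, U i) F) :=
  Algebra.adjoin F ({M | ∃ S, M = Amat U F S} ∪ {M | ∃ S, M = Emat U F x₀ S})

/-- `B_{g,h,i} = ∑_{g △ i ⊆ j ⊆ h} E_g A_j E_i`. -/
def Bmat (x₀ : ∀ i, U i) (g h i : Finset (Fin n)) : Matrix (∀ i, U i) (∀ i, U i) F :=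
  ∑ j ∈ Finset.univ.filter (fun j => symmDiff g i ⊆ j ∧ j ⊆ h),
    Emat U F x₀ g * Amat U F j * Emat U F x₀ i

/-- The index set `P` of triples `(a,b,c)` with `a △ c ⊆ b ⊆ (a △ c) ∪ (a ∩ c)°`. -/
def Pset : Finset (Finset (Fin n) × Finset (Fin n) × Finset (Fin n)) :=
  Finset.univ.filter fun t =>
    symmDiff t.1 t.2.2 ⊆ t.2.1 ∧ t.2.1 ⊆ symmDiff t.1 t.2.2 ∪ circ U (t.1 ∩ t.2.2)

/-- `n₁ = |{i | card (U i) = 2}|`. -/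
def nOne : ℕ := (Finset.univ.filter fun i : Fin n => Fintype.card (U i) = 2).card

/-- `n₂ = |{i | 2 < card (U i)}|`. -/
def nTwo : ℕ := (Finset.univ.filter fun i : Fin n => 2 < Fintype.card (U i)).card

end

lemma Equiv.Perm.exists_extend_of_eq_iff {α : Type*} [DecidableEq α] {w p q p' q' : α}
    (hp : w = p ↔ w = p') (hq : w = q ↔ w = q') (hpq : p = q ↔ p' = q') :
    ∃ e : Equiv.Perm α, e w = w ∧ e p = p' ∧ e q = q' := by
  refine ⟨(Equiv.swap p p').trans (Equiv.swap (Equiv.swap p p' q) q'), ?_, ?_, ?_⟩ <;>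
    simp only [Equiv.trans_apply, Equiv.swap_apply_def] <;> split_ifs <;> grind

/-- The equality patterns `(w ≠ u, u ≠ v, w ≠ v)` of three points: all equal, exactly one of `u`,
`v` moved away from `w`, `u = v ≠ w`, and, when `big` (there is a third letter), all distinct. -/
def admissiblePatterns (big : Prop) [Decidable big] : Finset (Bool × Bool × Bool) :=
  {(false, false, false), (true, true, false), (false, true, true), (true, false, true)} ∪
    if big then {(true, true, true)} else ∅

lemma card_admissiblePatterns (big : Prop) [Decidable big] :
    (admissiblePatterns big).card = if big then 5 else 4 := by
  unfold admissiblePatterns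
  split_ifs <;> rfl

section Pattern

variable {α : Type*} [DecidableEq α]

def eqPattern (w u v : α) : Bool × Bool × Bool :=
  (decide (w ≠ u), decide (u ≠ v), decide (w ≠ v))

lemma eqPattern_mem_admissiblePatterns [Fintype α] (w u v : α) :
    eqPattern w u v ∈ admissiblePatterns (2 < Fintype.card α) := by
  by_cases hwu : w = u <;> by_cases huv : u = v <;> by_cases hwv : w = v <;>
    simp_all [eqPattern, admissiblePatterns]
  rw [if_pos (Fintype.two_lt_card_iff.mpr ⟨w, u, v, hwu, hwv, huv⟩)]
  exact Finset.mem_singleton_self _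

lemma exists_eqPattern_eq [Fintype α] (hα : 2 ≤ Fintype.card α) (w : α)
    {p : Bool × Bool × Bool} (hp : p ∈ admissiblePatterns (2 < Fintype.card α)) :
    ∃ u v, eqPattern w u v = p := by
  have : Nontrivial α := Fintype.one_lt_card_iff_nontrivial.mp hα
  obtain ⟨u₀, hu₀⟩ := exists_ne w
  simp only [admissiblePatterns, Finset.mem_union, Finset.mem_insert, Finset.mem_singleton] at hp
  rcases hp with (rfl | rfl | rfl | rfl) | hp
  · exact ⟨w, w, by simp [eqPattern]⟩
  · exact ⟨u₀, w, by simp [eqPattern, hu₀, hu₀.symm]⟩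
  · exact ⟨w, u₀, by simp [eqPattern, hu₀.symm]⟩
  · exact ⟨u₀, u₀, by simp [eqPattern, hu₀.symm]⟩
  · split_ifs at hp with hbig
    · have : 1 < (Finset.univ.erase w).card := by
        rw [Finset.card_erase_of_mem (Finset.mem_univ w), Finset.card_univ]
        omega
      obtain ⟨u, hu, v, hv, huv⟩ := Finset.one_lt_card.mp this
      rw [Finset.mem_singleton.mp hp]
      exact ⟨u, v, by simp [eqPattern, (Finset.ne_of_mem_erase hu).symm,
        (Finset.ne_of_mem_erase hv).symm, huv]⟩
    · simp at hp

end Pattern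

section Triples

variable {n : ℕ}

def memPattern (t : Finset (Fin n) × Finset (Fin n) × Finset (Fin n)) (i : Fin n) :
    Bool × Bool × Bool :=
  (decide (i ∈ t.1), decide (i ∈ t.2.1), decide (i ∈ t.2.2))

lemma memPattern_injective :
    Function.Injective (memPattern : Finset (Fin n) × Finset (Fin n) × Finset (Fin n) → _) := by
  intro s t h
  have h' := fun i => congrFun h i
  simp only [memPattern, Prod.mk.injEq, decide_eq_decide] at h'
  ext i <;> simp [h' i]

variable {U : Fin n → Type} [∀ i, Fintype (U i)]

lemma mem_Pset_iff {t : Finset (Fin n) × Finset (Fin n) × Finset (Fin n)} :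
    t ∈ Pset U ↔ ∀ i, memPattern t i ∈ admissiblePatterns (2 < Fintype.card (U i)) := by
  obtain ⟨a, b, c⟩ := t
  simp only [Pset, circ, Finset.mem_filter, Finset.mem_univ, true_and, Finset.subset_iff,
    Finset.mem_symmDiff, Finset.mem_union, Finset.mem_inter, ← forall_and]
  refine forall_congr' fun i => ?_
  by_cases ha : i ∈ a <;> by_cases hb : i ∈ b <;> by_cases hc : i ∈ c <;>
    by_cases hbig : 2 < Fintype.card (U i) <;> simp [memPattern, admissiblePatterns, ha, hb, hc, hbig]

lemma card_Pset (hU : ∀ i, 2 ≤ Fintype.card (U i)) :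
    (Pset U).card = 2 ^ (2 * nOne U) * 5 ^ (nTwo U) := by
  have hcard : (Pset U).card =
      (Fintype.piFinset fun i => admissiblePatterns (2 < Fintype.card (U i))).card := by
    refine Finset.card_nbij' memPattern
      (fun f => (Finset.univ.filter fun i => (f i).1, Finset.univ.filter fun i => (f i).2.1,
        Finset.univ.filter fun i => (f i).2.2)) ?_ ?_ ?_ ?_
    · intro t ht
      simpa using mem_Pset_iff.mp ht
    · intro f hf
      refine mem_Pset_iff.mpr fun i => ?_
      simpa [memPattern] using Fintype.mem_piFinset.mp hf i
    · intro t _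
      ext i <;> simp [memPattern]
    · intro f _
      funext i
      simp [memPattern]
  have hsmall : Finset.univ.filter (fun i : Fin n => ¬ 2 < Fintype.card (U i)) =
      Finset.univ.filter (fun i => Fintype.card (U i) = 2) :=
    Finset.filter_congr fun i _ => by have := hU i; omega
  rw [hcard, Fintype.card_piFinset]
  simp only [card_admissiblePatterns]
  rw [Finset.prod_ite, Finset.prod_const, Finset.prod_const, hsmall, nOne, nTwo, pow_mul]
  ring

end Triples

section Realization

variable {n : ℕ} {U : Fin n → Type} [∀ i, DecidableEq (U i)]

def disTriple (x₀ x y : ∀ i, U i) : Finset (Fin n) × Finset (Fin n) × Finset (Fin n) :=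
  (dis x₀ x, dis x y, dis x₀ y)

lemma memPattern_disTriple (x₀ x y : ∀ i, U i) (i : Fin n) :
    memPattern (disTriple x₀ x y) i = eqPattern (x₀ i) (x i) (y i) := by
  simp [memPattern, disTriple, eqPattern, dis]

variable [∀ i, Fintype (U i)]

lemma disTriple_mem_Pset (x₀ x y : ∀ i, U i) : disTriple x₀ x y ∈ Pset U :=
  mem_Pset_iff.mpr fun i => memPattern_disTriple x₀ x y i ▸ eqPattern_mem_admissiblePatterns _ _ _

lemma exists_disTriple_eq (hU : ∀ i, 2 ≤ Fintype.card (U i)) (x₀ : ∀ i, U i)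
    {t : Finset (Fin n) × Finset (Fin n) × Finset (Fin n)} (ht : t ∈ Pset U) :
    ∃ x y, disTriple x₀ x y = t := by
  choose x y hxy using fun i => exists_eqPattern_eq (hU i) (x₀ i) (mem_Pset_iff.mp ht i)
  exact ⟨x, y, memPattern_injective
    (funext fun i => (memPattern_disTriple x₀ x y i).trans (hxy i))⟩

end Realization

section Invariance

variable {n : ℕ} {U : Fin n → Type} [∀ i, DecidableEq (U i)]

lemma dis_piCongrRight (e : ∀ i, Equiv.Perm (U i)) (x y : ∀ i, U i) :
    dis (Equiv.piCongrRight e x) (Equiv.piCongrRight e y) = dis x y := by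
  ext i
  simp [dis]

lemma exists_perm_of_disTriple_eq {x₀ x y x' y' : ∀ i, U i}
    (h : disTriple x₀ x y = disTriple x₀ x' y') :
    ∃ e : ∀ i, Equiv.Perm (U i), (∀ i, e i (x₀ i) = x₀ i) ∧
      Equiv.piCongrRight e x = x' ∧ Equiv.piCongrRight e y = y' := by
  have hpat i := congrArg (memPattern · i) h
  simp only [memPattern_disTriple, eqPattern, Prod.mk.injEq, decide_eq_decide, ne_eq,
    not_iff_not] at hpat
  choose e he using fun i =>
    Equiv.Perm.exists_extend_of_eq_iff (hpat i).1 (hpat i).2.2 (hpat i).2.1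
  exact ⟨e, fun i => (he i).1, funext fun i => (he i).2.1, funext fun i => (he i).2.2⟩

variable [∀ i, Fintype (U i)] (F : Type) [Field F]

def stabInvariant (x₀ : ∀ i, U i) : Subalgebra F (Matrix (∀ i, U i) (∀ i, U i) F) :=
  ⨅ e : {e : ∀ i, Equiv.Perm (U i) // ∀ i, e i (x₀ i) = x₀ i},
    AlgHom.equalizer (Matrix.reindexAlgEquiv F F (Equiv.piCongrRight e.1).symm).toAlgHom
      (AlgHom.id F _)

variable {F} {x₀ : ∀ i, U i}

lemma mem_stabInvariant {M : Matrix (∀ i, U i) (∀ i, U i) F} :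
    M ∈ stabInvariant F x₀ ↔ ∀ e : ∀ i, Equiv.Perm (U i), (∀ i, e i (x₀ i) = x₀ i) →
      M.submatrix (Equiv.piCongrRight e) (Equiv.piCongrRight e) = M := by
  simp [stabInvariant, Algebra.mem_iInf, AlgHom.mem_equalizer, Matrix.reindex_apply]

lemma Amat_mem_stabInvariant (S : Finset (Fin n)) : Amat U F S ∈ stabInvariant F x₀ :=
  mem_stabInvariant.mpr fun e _ => by
    ext x y
    simp [Amat, dis_piCongrRight]

lemma Emat_mem_stabInvariant (S : Finset (Fin n)) : Emat U F x₀ S ∈ stabInvariant F x₀ :=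
  mem_stabInvariant.mpr fun e he => by
    have hx₀ : Equiv.piCongrRight e x₀ = x₀ := funext he
    rw [Emat, Matrix.submatrix_diagonal_equiv]
    congr 1
    funext y
    simp only [Function.comp_apply]
    rw [← dis_piCongrRight e x₀ y, hx₀]

lemma Tw_le_stabInvariant : Tw U F x₀ ≤ stabInvariant F x₀ :=
  Algebra.adjoin_le <| by
    rintro _ (⟨S, rfl⟩ | ⟨S, rfl⟩)
    exacts [Amat_mem_stabInvariant S, Emat_mem_stabInvariant S]

lemma apply_eq_of_mem_stabInvariant {M : Matrix (∀ i, U i) (∀ i, U i) F}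
    (hM : M ∈ stabInvariant F x₀) {x y x' y' : ∀ i, U i}
    (h : disTriple x₀ x y = disTriple x₀ x' y') : M x y = M x' y' := by
  obtain ⟨e, he, rfl, rfl⟩ := exists_perm_of_disTriple_eq h
  exact (congrFun₂ (mem_stabInvariant.mp hM e he) x y).symm

end Invariance

section Basis

variable {n : ℕ} {U : Fin n → Type} [∀ i, Fintype (U i)] [∀ i, DecidableEq (U i)]
  (F : Type) [Field F]

def tripleMat (x₀ : ∀ i, U i) (t : Finset (Fin n) × Finset (Fin n) × Finset (Fin n)) :
    Matrix (∀ i, U i) (∀ i, U i) F :=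
  Emat U F x₀ t.1 * Amat U F t.2.1 * Emat U F x₀ t.2.2

variable {F} {x₀ : ∀ i, U i}

lemma tripleMat_apply (t : Finset (Fin n) × Finset (Fin n) × Finset (Fin n)) (x y : ∀ i, U i) :
    tripleMat F x₀ t x y = if disTriple x₀ x y = t then 1 else 0 := by
  obtain ⟨a, b, c⟩ := t
  simp only [tripleMat, Emat, Amat, Matrix.mul_diagonal, Matrix.diagonal_mul, Matrix.of_apply,
    disTriple, Prod.mk.injEq]
  split_ifs <;> simp_all

lemma tripleMat_mem_Tw (t : Finset (Fin n) × Finset (Fin n) × Finset (Fin n)) :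
    tripleMat F x₀ t ∈ Tw U F x₀ :=
  mul_mem (mul_mem (Algebra.subset_adjoin (Or.inr ⟨_, rfl⟩))
    (Algebra.subset_adjoin (Or.inl ⟨_, rfl⟩))) (Algebra.subset_adjoin (Or.inr ⟨_, rfl⟩))

lemma sum_smul_tripleMat_apply (g : {t // t ∈ Pset U} → F) (x y : ∀ i, U i) :
    (∑ s, g s • tripleMat F x₀ s.1) x y = g ⟨disTriple x₀ x y, disTriple_mem_Pset x₀ x y⟩ := by
  rw [Matrix.sum_apply, Finset.sum_eq_single_of_mem
    ⟨disTriple x₀ x y, disTriple_mem_Pset x₀ x y⟩ (Finset.mem_univ _)]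
  · simp [tripleMat_apply]
  · intro s _ hs
    rw [Matrix.smul_apply, tripleMat_apply, if_neg (fun h => hs (Subtype.ext h.symm)), smul_zero]

lemma linearIndependent_tripleMat (hU : ∀ i, 2 ≤ Fintype.card (U i)) :
    LinearIndependent F fun t : {t // t ∈ Pset U} => tripleMat F x₀ t.1 := by
  refine Fintype.linearIndependent_iff.mpr fun g hg t => ?_
  obtain ⟨x, y, hxy⟩ := exists_disTriple_eq hU x₀ t.2
  have := sum_smul_tripleMat_apply (x₀ := x₀) g x y
  rw [hg] at this
  simpa [hxy] using this.symm

lemma mem_span_tripleMat (hU : ∀ i, 2 ≤ Fintype.card (U i))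
    {M : Matrix (∀ i, U i) (∀ i, U i) F} (hM : M ∈ stabInvariant F x₀) :
    M ∈ Submodule.span F (Set.range fun t : {t // t ∈ Pset U} => tripleMat F x₀ t.1) := by
  choose x y hxy using fun t : {t // t ∈ Pset U} => exists_disTriple_eq hU x₀ t.2
  have hM_eq : M = ∑ t, M (x t) (y t) • tripleMat F x₀ t.1 := by
    ext a b
    rw [sum_smul_tripleMat_apply]
    exact apply_eq_of_mem_stabInvariant hM (hxy ⟨_, disTriple_mem_Pset x₀ a b⟩).symm
  rw [hM_eq]
  exact Submodule.sum_mem _ fun t _ => Submodule.smul_mem _ _ (Submodule.subset_span ⟨t, rfl⟩)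

lemma span_tripleMat_eq (hU : ∀ i, 2 ≤ Fintype.card (U i)) :
    Submodule.span F (Set.range fun t : {t // t ∈ Pset U} => tripleMat F x₀ t.1) =
      Subalgebra.toSubmodule (Tw U F x₀) :=
  le_antisymm (Submodule.span_le.mpr <| Set.range_subset_iff.mpr fun t => tripleMat_mem_Tw t.1)
    fun _ hM => mem_span_tripleMat hU (Tw_le_stabInvariant hM)

end Basis

section

variable {n : ℕ}
variable (U : Fin n → Type) [∀ i, Fintype (U i)] [∀ i, DecidableEq (U i)]
variable (F : Type) [Field F]

theorem stmt1 (hU : ∀ i, 2 ≤ Fintype.card (U i)) (x₀ : ∀ i, U i) :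
    (∃ b : Module.Basis {t : Finset (Fin n) × Finset (Fin n) × Finset (Fin n) // t ∈ Pset U} F
        (Tw U F x₀),
      ∀ t, ((b t : Tw U F x₀) : Matrix (∀ i, U i) (∀ i, U i) F) =
        Emat U F x₀ t.1.1 * Amat U F t.1.2.1 * Emat U F x₀ t.1.2.2) ∧
    (Pset U).card = 2 ^ (2 * nOne U) * 5 ^ (nTwo U) := by
  refine ⟨⟨(Module.Basis.span (linearIndependent_tripleMat hU)).map
    (LinearEquiv.ofEq _ _ (span_tripleMat_eq hU)), fun t => ?_⟩, card_Pset hU⟩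
  rw [Module.Basis.map_apply, LinearEquiv.coe_ofEq_apply, Module.Basis.span_apply]
  rfl

end
end

section
/- Assume (g,h,i) ∈ P and (j,k,l) ∈ P. Then (g, ⟦g,h,i,k,l⟧, l) ∈ P, and the matrix product satisfies: B_{g,h,i} * B_{j,k,l} = 0 if i ≠ j, while if i = j then B_{g,h,i} * B_{i,k,l} = ((k_{h ∩ i ∩ k} : ℕ) : F) • B_{g, ⟦g,h,i,k,l⟧, l}. -/
open Matrix Finset
open scoped Classical

set_option synthInstance.maxHeartbeats 1000000
set_option maxHeartbeats 2000000

noncomputable section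

variable {n : ℕ}

variable (U : Fin n → Type) [∀ i, Fintype (U i)] [∀ i, DecidableEq (U i)]
variable (F : Type) [Field F]

/-- `⟦g,h,i,k,l⟧ = (g △ l) ∪ ((g ∩ l)° \ i) ∪ ((h ∪ k) ∩ (g ∩ i ∩ l)°)`. -/
def br (g h i k l : Finset (Fin n)) : Finset (Fin n) :=
  symmDiff g l ∪ (circ U (g ∩ l) \ i) ∪ ((h ∪ k) ∩ circ U (g ∩ i ∩ l))

set_option linter.unusedSectionVars false
section Aux
variable {n : ℕ} {U : Fin n → Type} [∀ i, Fintype (U i)] [∀ i, DecidableEq (U i)]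

lemma mem_dis {x y : ∀ i, U i} {t : Fin n} : t ∈ dis x y ↔ x t ≠ y t := by
  simp [dis]

lemma symmDiff_dis_subset (x₀ x y : ∀ i, U i) :
    symmDiff (dis x₀ x) (dis x₀ y) ⊆ dis x y := by
  intro t ht
  simp only [Finset.mem_symmDiff, mem_dis, not_not, ne_eq] at ht ⊢
  rcases ht with ⟨h1, h2⟩ | ⟨h1, h2⟩ <;> simp_all [eq_comm]

lemma card_eq_two_aux {α : Type} [Fintype α] (hc : ¬ 2 < Fintype.card α)
    {o u w : α} (hu : o ≠ u) (hw : o ≠ w) : u = w := by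
  by_contra hne
  exact hc (Fintype.two_lt_card_iff.2 ⟨o, u, w, hu, hw, hne⟩)

end Aux
section Aux2
set_option linter.unusedSectionVars false

lemma coordCount {α : Type} [Fintype α] [DecidableEq α] (h2c : 2 ≤ Fintype.card α)
    (o u w : α) (b hh kk : Prop) [Decidable b] [Decidable hh] [Decidable kk]
    (c1 : ¬((o ≠ u) ↔ b) → hh)
    (c2 : hh → ¬((o ≠ u) ↔ b) ∨ ((o ≠ u) ∧ b ∧ 2 < Fintype.card α))
    (c3 : ¬(b ↔ (o ≠ w)) → kk)
    (c4 : kk → ¬(b ↔ (o ≠ w)) ∨ (b ∧ (o ≠ w) ∧ 2 < Fintype.card α)) :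
    (Finset.univ.filter fun v => ((o ≠ v) ↔ b) ∧ (¬hh → u = v) ∧ (¬kk → v = w)).card
      = (if hh ∧ b ∧ kk then Fintype.card α - 1 else 1) *
        (if u = w ∨ (¬((o ≠ u) ↔ (o ≠ w)) ∨ ((o ≠ u) ∧ (o ≠ w) ∧ 2 < Fintype.card α ∧ ¬b)
             ∨ ((hh ∨ kk) ∧ (o ≠ u) ∧ b ∧ (o ≠ w) ∧ 2 < Fintype.card α)) then 1 else 0) := by
  by_cases hb : b
  · by_cases hH : hh
    · by_cases hK : kk
      · -- b, hh, kk : filter = univ.erase o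
        have hfil : (Finset.univ.filter fun v => ((o ≠ v) ↔ b) ∧ (¬hh → u = v) ∧ (¬kk → v = w))
            = Finset.univ.erase o := by
          rw [← Finset.filter_ne Finset.univ o]
          apply Finset.filter_congr
          intro v _
          simp [hb, hH, hK]
        rw [hfil, Finset.card_erase_of_mem (Finset.mem_univ o), Finset.card_univ]
        have hcond : u = w ∨ (¬((o ≠ u) ↔ (o ≠ w)) ∨ ((o ≠ u) ∧ (o ≠ w) ∧ 2 < Fintype.card α ∧ ¬b)
             ∨ ((hh ∨ kk) ∧ (o ≠ u) ∧ b ∧ (o ≠ w) ∧ 2 < Fintype.card α)) := by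
          rcases c2 hH with h | ⟨ha, _, hcc⟩
          · rcases c4 hK with h' | ⟨_, hc, _⟩
            · left
              have e1 : o = u := by by_contra hx; exact h ⟨fun _ => hb, fun _ => hx⟩
              have e2 : o = w := by by_contra hx; exact h' ⟨fun _ => hx, fun _ => hb⟩
              exact e1.symm.trans e2
            · right; left
              intro hiff
              exact h ⟨fun _ => hb, fun _ => hiff.2 hc⟩
          · rcases c4 hK with h' | ⟨_, hc, _⟩
            · right; left
              intro hiff
              exact h' ⟨fun _ => hiff.1 ha, fun _ => hb⟩
            · right; right; right; exact ⟨Or.inl hH, ha, hb, hc, hcc⟩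
        rw [if_pos ⟨hH, hb, hK⟩, if_pos hcond, mul_one]
      · -- b, hh, ¬kk : c implied, filter = {w}
        have hc : o ≠ w := by
          by_contra hx
          exact hK (c3 (by simp [hb, hx]))
        have hfil : (Finset.univ.filter fun v => ((o ≠ v) ↔ b) ∧ (¬hh → u = v) ∧ (¬kk → v = w))
            = {w} := by
          ext v
          simp only [Finset.mem_filter, Finset.mem_univ, true_and, Finset.mem_singleton]
          constructor
          · rintro ⟨-, -, hv3⟩; exact hv3 hK
          · rintro rfl; exact ⟨⟨fun _ => hb, fun _ => hc⟩, fun hnh => absurd hH hnh, fun _ => rfl⟩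
        rw [hfil, Finset.card_singleton]
        have hcond : u = w ∨ (¬((o ≠ u) ↔ (o ≠ w)) ∨ ((o ≠ u) ∧ (o ≠ w) ∧ 2 < Fintype.card α ∧ ¬b)
             ∨ ((hh ∨ kk) ∧ (o ≠ u) ∧ b ∧ (o ≠ w) ∧ 2 < Fintype.card α)) := by
          rcases c2 hH with h | ⟨ha, _, hcc⟩
          · right; left
            intro hiff
            exact h ⟨fun _ => hb, fun _ => hiff.2 hc⟩
          · right; right; right; exact ⟨Or.inl hH, ha, hb, hc, hcc⟩
        rw [if_neg (by tauto), if_pos hcond, one_mul]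
    · -- b, ¬hh: a holds
      have ha : o ≠ u := by
        by_contra hx
        exact hH (c1 (by simp [hb, hx]))
      by_cases hd : (¬kk → u = w)
      · have hfil : (Finset.univ.filter fun v => ((o ≠ v) ↔ b) ∧ (¬hh → u = v) ∧ (¬kk → v = w))
            = {u} := by
          ext v
          simp only [Finset.mem_filter, Finset.mem_univ, true_and, Finset.mem_singleton]
          constructor
          · rintro ⟨-, hv2, -⟩; exact (hv2 hH).symm
          · rintro rfl
            exact ⟨⟨fun _ => hb, fun _ => ha⟩, fun _ => rfl, fun hk => hd hk⟩
        rw [hfil, Finset.card_singleton]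
        have hcond : u = w ∨ (¬((o ≠ u) ↔ (o ≠ w)) ∨ ((o ≠ u) ∧ (o ≠ w) ∧ 2 < Fintype.card α ∧ ¬b)
             ∨ ((hh ∨ kk) ∧ (o ≠ u) ∧ b ∧ (o ≠ w) ∧ 2 < Fintype.card α)) := by
          by_cases hK : kk
          · rcases c4 hK with h' | ⟨_, hc, hcc⟩
            · right; left
              intro hiff
              exact h' ⟨fun _ => hiff.1 ha, fun _ => hb⟩
            · right; right; right; exact ⟨Or.inr hK, ha, hb, hc, hcc⟩
          · left; exact hd hK
        rw [if_neg (by tauto), if_pos hcond, one_mul]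
      · push_neg at hd
        obtain ⟨hK, huw⟩ := hd
        have hfil : (Finset.univ.filter fun v => ((o ≠ v) ↔ b) ∧ (¬hh → u = v) ∧ (¬kk → v = w))
            = ∅ := by
          ext v
          simp only [Finset.mem_filter, Finset.mem_univ, true_and, Finset.notMem_empty, iff_false]
          rintro ⟨-, hv2, hv3⟩
          exact huw ((hv2 hH).trans (hv3 hK))
        rw [hfil, Finset.card_empty]
        have hcc : o ≠ w := by
          by_contra hx
          exact hK (c3 (by simp [hb, hx]))
        have hcond : ¬(u = w ∨ (¬((o ≠ u) ↔ (o ≠ w)) ∨ ((o ≠ u) ∧ (o ≠ w) ∧ 2 < Fintype.card α ∧ ¬b)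
             ∨ ((hh ∨ kk) ∧ (o ≠ u) ∧ b ∧ (o ≠ w) ∧ 2 < Fintype.card α))) := by
          rintro (h | h | ⟨-, -, -, hnb⟩ | ⟨hor, -⟩)
          · exact huw h
          · exact h ⟨fun _ => hcc, fun _ => ha⟩
          · exact hnb hb
          · rcases hor with h' | h'
            · exact hH h'
            · exact hK h'
        rw [if_neg hcond, mul_zero]
  · -- ¬b : count 1 always
    have hhu : ¬hh → o = u := by
      intro hnh; by_contra hx
      exact hnh (c1 (by simp [hb]; push_neg at hx; exact hx))
    have hkw : ¬kk → o = w := by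
      intro hnk; by_contra hx
      exact hnk (c3 (by simp [hb]; push_neg at hx; exact hx))
    have hfil : (Finset.univ.filter fun v => ((o ≠ v) ↔ b) ∧ (¬hh → u = v) ∧ (¬kk → v = w))
        = {o} := by
      ext v
      simp only [Finset.mem_filter, Finset.mem_univ, true_and, Finset.mem_singleton]
      constructor
      · rintro ⟨hv1, -, -⟩
        by_contra hx
        exact hb (hv1.1 (fun e => hx e.symm))
      · rintro rfl
        exact ⟨⟨fun hx => absurd rfl hx, fun x => absurd x hb⟩,
          fun hnh => (hhu hnh).symm, fun hnk => hkw hnk⟩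
    rw [hfil, Finset.card_singleton]
    have hcond : u = w ∨ (¬((o ≠ u) ↔ (o ≠ w)) ∨ ((o ≠ u) ∧ (o ≠ w) ∧ 2 < Fintype.card α ∧ ¬b)
         ∨ ((hh ∨ kk) ∧ (o ≠ u) ∧ b ∧ (o ≠ w) ∧ 2 < Fintype.card α)) := by
      by_cases ha : o ≠ u <;> by_cases hc : o ≠ w
      · by_cases hcc : 2 < Fintype.card α
        · right; right; left; exact ⟨ha, hc, hcc, hb⟩
        · left; exact card_eq_two_aux hcc ha hc
      · right; left; intro hiff; exact hc (hiff.1 ha)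
      · right; left; intro hiff; exact ha (hiff.2 hc)
      · push_neg at ha hc; left; rw [← ha, ← hc]
    rw [if_neg (by tauto), if_pos hcond, one_mul]

end Aux2
section Aux3
set_option linter.unusedSectionVars false
variable {n : ℕ} {U : Fin n → Type} [∀ i, Fintype (U i)] [∀ i, DecidableEq (U i)]

lemma mem_br_iff {g h i k l : Finset (Fin n)} {t : Fin n} :
    t ∈ br U g h i k l ↔
      (¬(t ∈ g ↔ t ∈ l) ∨ (t ∈ g ∧ t ∈ l ∧ 2 < Fintype.card (U t) ∧ t ∉ i)
        ∨ ((t ∈ h ∨ t ∈ k) ∧ t ∈ g ∧ t ∈ i ∧ t ∈ l ∧ 2 < Fintype.card (U t))) := by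
  simp only [br, circ, Finset.mem_union, Finset.mem_sdiff, Finset.mem_inter,
    Finset.mem_filter, Finset.mem_symmDiff]
  tauto

lemma card_filter_pi (Q : ∀ t, U t → Prop) [∀ t, DecidablePred (Q t)] :
    (Finset.univ.filter fun y : ∀ t, U t => ∀ t, Q t (y t)).card
      = ∏ t, (Finset.univ.filter (Q t)).card := by
  rw [← Fintype.card_subtype]
  rw [Fintype.card_congr (Equiv.subtypePiEquivPi (p := Q))]
  rw [Fintype.card_pi]
  exact Finset.prod_congr rfl fun t _ => Fintype.card_subtype _

lemma count_main (hU : ∀ t, 2 ≤ Fintype.card (U t)) (x₀ x z : ∀ i, U i)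
    {g h i k l : Finset (Fin n)}
    (hx : dis x₀ x = g) (hz : dis x₀ z = l)
    (hgi1 : symmDiff g i ⊆ h) (hgi2 : h ⊆ symmDiff g i ∪ circ U (g ∩ i))
    (hil1 : symmDiff i l ⊆ k) (hil2 : k ⊆ symmDiff i l ∪ circ U (i ∩ l)) :
    (Finset.univ.filter fun y => dis x₀ y = i ∧ dis x y ⊆ h ∧ dis y z ⊆ k).card
      = val U (h ∩ i ∩ k) * (if dis x z ⊆ br U g h i k l then 1 else 0) := by
  have hpred : ∀ y : ∀ t, U t,
      (dis x₀ y = i ∧ dis x y ⊆ h ∧ dis y z ⊆ k) ↔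
      ∀ t, ((x₀ t ≠ y t) ↔ t ∈ i) ∧ (t ∉ h → x t = y t) ∧ (t ∉ k → y t = z t) := by
    intro y
    constructor
    · rintro ⟨e1, e2, e3⟩ t
      refine ⟨by simp [← e1, mem_dis], ?_, ?_⟩
      · intro hth; by_contra hne; exact hth (e2 (mem_dis.2 hne))
      · intro htk; by_contra hne; exact htk (e3 (mem_dis.2 hne))
    · intro H
      refine ⟨?_, ?_, ?_⟩
      · ext t; rw [mem_dis]; exact (H t).1
      · intro t ht; by_contra hth; exact (mem_dis.1 ht) ((H t).2.1 hth)
      · intro t ht; by_contra htk; exact (mem_dis.1 ht) ((H t).2.2 htk)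
  rw [Finset.filter_congr (fun y _ => hpred y)]
  rw [card_filter_pi (fun t v => ((x₀ t ≠ v) ↔ t ∈ i) ∧ (t ∉ h → x t = v) ∧ (t ∉ k → v = z t))]
  have hstep : ∀ t, (Finset.univ.filter fun v =>
        ((x₀ t ≠ v) ↔ t ∈ i) ∧ (t ∉ h → x t = v) ∧ (t ∉ k → v = z t)).card
      = (if t ∈ h ∩ i ∩ k then Fintype.card (U t) - 1 else 1) *
        (if x t = z t ∨ t ∈ br U g h i k l then 1 else 0) := by
    intro t
    have hg : t ∈ g ↔ (x₀ t ≠ x t) := by rw [← hx, mem_dis]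
    have hl : t ∈ l ↔ (x₀ t ≠ z t) := by rw [← hz, mem_dis]
    have c1 : ¬((x₀ t ≠ x t) ↔ t ∈ i) → t ∈ h := by
      intro hne; apply hgi1; rw [Finset.mem_symmDiff]; tauto
    have c2 : t ∈ h → ¬((x₀ t ≠ x t) ↔ t ∈ i) ∨ ((x₀ t ≠ x t) ∧ t ∈ i ∧ 2 < Fintype.card (U t)) := by
      intro hth
      have h2 := hgi2 hth
      simp only [Finset.mem_union, Finset.mem_symmDiff, circ, Finset.mem_filter,
        Finset.mem_inter] at h2
      tauto
    have c3 : ¬(t ∈ i ↔ (x₀ t ≠ z t)) → t ∈ k := by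
      intro hne; apply hil1; rw [Finset.mem_symmDiff]; tauto
    have c4 : t ∈ k → ¬(t ∈ i ↔ (x₀ t ≠ z t)) ∨ (t ∈ i ∧ (x₀ t ≠ z t) ∧ 2 < Fintype.card (U t)) := by
      intro htk
      have h2 := hil2 htk
      simp only [Finset.mem_union, Finset.mem_symmDiff, circ, Finset.mem_filter,
        Finset.mem_inter] at h2
      tauto
    rw [coordCount (hU t) (x₀ t) (x t) (z t) (t ∈ i) (t ∈ h) (t ∈ k) c1 c2 c3 c4]
    refine congrArg₂ (· * ·) (if_congr ?_ rfl rfl) (if_congr (or_congr Iff.rfl ?_) rfl rfl)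
    · simp only [Finset.mem_inter]; tauto
    · rw [mem_br_iff]; tauto
  rw [Finset.prod_congr rfl (fun t _ => hstep t), Finset.prod_mul_distrib]
  congr 1
  · rw [Finset.prod_ite_mem Finset.univ (h ∩ i ∩ k) (fun t => Fintype.card (U t) - 1),
      Finset.univ_inter]
    rfl
  · by_cases hss : dis x z ⊆ br U g h i k l
    · rw [if_pos hss]
      apply Finset.prod_eq_one
      intro t _
      rw [if_pos]
      by_cases he : x t = z t
      · exact Or.inl he
      · exact Or.inr (hss (mem_dis.2 he))
    · rw [if_neg hss]
      obtain ⟨t, ht, htn⟩ := Finset.not_subset.1 hss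
      exact Finset.prod_eq_zero (Finset.mem_univ t) (by rw [if_neg]; push_neg; exact ⟨mem_dis.1 ht, htn⟩)

end Aux3
section Aux4
set_option linter.unusedSectionVars false
variable {n : ℕ} {U : Fin n → Type} [∀ i, Fintype (U i)] [∀ i, DecidableEq (U i)]
variable {F : Type} [Field F]

lemma Bmat_apply (x₀ : ∀ i, U i) (g h i : Finset (Fin n)) (x y : ∀ i, U i) :
    Bmat U F x₀ g h i x y =
      if dis x₀ x = g ∧ dis x₀ y = i ∧ symmDiff g i ⊆ dis x y ∧ dis x y ⊆ h then 1 else 0 := by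
  rw [Bmat, Matrix.sum_apply]
  have key : ∀ j, (Emat U F x₀ g * Amat U F j * Emat U F x₀ i) x y
      = if dis x y = j then (if dis x₀ x = g ∧ dis x₀ y = i then (1:F) else 0) else 0 := by
    intro j
    rw [Emat, Emat, Amat, Matrix.mul_diagonal, Matrix.diagonal_mul]
    simp only [Matrix.of_apply]
    by_cases e1 : dis x y = j <;> by_cases e2 : dis x₀ x = g <;> by_cases e3 : dis x₀ y = i <;>
      simp [e1, e2, e3]
  rw [Finset.sum_congr rfl (fun j _ => key j), Finset.sum_ite_eq]
  simp only [Finset.mem_filter, Finset.mem_univ, true_and]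
  split_ifs <;> first | rfl | tauto

end Aux4
/-- The structure constants of the basis `B` of the Terwilliger algebra. -/
theorem stmt4 (hn : 1 ≤ n) (hU : ∀ i, 2 ≤ Fintype.card (U i)) (x₀ : ∀ i, U i)
    (g h i j k l : Finset (Fin n))
    (h1 : (g, h, i) ∈ Pset U) (h2 : (j, k, l) ∈ Pset U) :
    (g, br U g h i k l, l) ∈ Pset U ∧
    (i ≠ j → Bmat U F x₀ g h i * Bmat U F x₀ j k l = 0) ∧
    (i = j → Bmat U F x₀ g h i * Bmat U F x₀ j k l =
      ((val U (h ∩ i ∩ k) : ℕ) : F) • Bmat U F x₀ g (br U g h i k l) l) := by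
  simp only [Pset, Finset.mem_filter, Finset.mem_univ, true_and] at h1 h2
  obtain ⟨hgi1, hgi2⟩ := h1
  obtain ⟨hjl1, hjl2⟩ := h2
  refine ⟨?_, ?_, ?_⟩
  · simp only [Pset, Finset.mem_filter, Finset.mem_univ, true_and]
    constructor
    · intro t ht
      exact Finset.mem_union_left _ (Finset.mem_union_left _ ht)
    · intro t ht
      rw [Finset.mem_union]
      rcases Finset.mem_union.1 ht with ht' | ht'
      · rcases Finset.mem_union.1 ht' with ht'' | ht''
        · left; exact ht''
        · right
          simp only [circ, Finset.mem_filter, Finset.mem_sdiff, Finset.mem_inter] at ht'' ⊢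
          tauto
      · right
        simp only [circ, Finset.mem_filter, Finset.mem_inter] at ht' ⊢
        tauto
  · intro hij
    ext x z
    rw [Matrix.mul_apply, Matrix.zero_apply]
    apply Finset.sum_eq_zero
    intro y _
    rw [Bmat_apply, Bmat_apply, ite_zero_mul_ite_zero]
    rw [if_neg]
    rintro ⟨⟨-, e1, -⟩, ⟨e2, -⟩⟩
    exact hij (e1 ▸ e2 ▸ rfl)
  · rintro rfl
    ext x z
    rw [Matrix.mul_apply, Matrix.smul_apply, Bmat_apply, smul_eq_mul]
    have key : ∀ y, Bmat U F x₀ g h i x y * Bmat U F x₀ i k l y z =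
        if ((dis x₀ x = g ∧ dis x₀ y = i ∧ symmDiff g i ⊆ dis x y ∧ dis x y ⊆ h) ∧
            (dis x₀ y = i ∧ dis x₀ z = l ∧ symmDiff i l ⊆ dis y z ∧ dis y z ⊆ k)) then 1 else 0 :=
      fun y => by rw [Bmat_apply, Bmat_apply, ite_zero_mul_ite_zero, one_mul]
    rw [Finset.sum_congr rfl (fun y _ => key y), Finset.sum_boole]
    by_cases hxg : dis x₀ x = g
    · by_cases hzl : dis x₀ z = l
      · have hiff : ∀ y : ∀ t, U t,
            ((dis x₀ x = g ∧ dis x₀ y = i ∧ symmDiff g i ⊆ dis x y ∧ dis x y ⊆ h) ∧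
             (dis x₀ y = i ∧ dis x₀ z = l ∧ symmDiff i l ⊆ dis y z ∧ dis y z ⊆ k)) ↔
            (dis x₀ y = i ∧ dis x y ⊆ h ∧ dis y z ⊆ k) := by
          intro y
          constructor
          · rintro ⟨⟨-, e1, -, e2⟩, ⟨-, -, -, e3⟩⟩; exact ⟨e1, e2, e3⟩
          · rintro ⟨e1, e2, e3⟩
            exact ⟨⟨hxg, e1, by rw [← hxg, ← e1]; exact symmDiff_dis_subset _ _ _, e2⟩,
                   ⟨e1, hzl, by rw [← e1, ← hzl]; exact symmDiff_dis_subset _ _ _, e3⟩⟩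
        rw [Finset.filter_congr (fun y _ => hiff y)]
        rw [count_main hU x₀ x z hxg hzl hgi1 hgi2 hjl1 hjl2]
        have hsub : symmDiff g l ⊆ dis x z := by
          rw [← hxg, ← hzl]; exact symmDiff_dis_subset _ _ _
        have hc : (dis x₀ x = g ∧ dis x₀ z = l ∧ symmDiff g l ⊆ dis x z ∧
            dis x z ⊆ br U g h i k l) ↔ (dis x z ⊆ br U g h i k l) :=
          ⟨fun ⟨_, _, _, c⟩ => c, fun c => ⟨hxg, hzl, hsub, c⟩⟩
        rw [if_congr hc rfl rfl, Nat.cast_mul]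
        congr 1
        split_ifs <;> simp
      · rw [Finset.filter_false_of_mem, Finset.card_empty, Nat.cast_zero,
          if_neg (by rintro ⟨-, e, -⟩; exact hzl e), mul_zero]
        rintro y - ⟨-, ⟨-, e, -⟩⟩
        exact hzl e
    · rw [Finset.filter_false_of_mem, Finset.card_empty, Nat.cast_zero,
        if_neg (by rintro ⟨e, -⟩; exact hxg e), mul_zero]
      rintro y - ⟨⟨e, -⟩, -⟩
      exact hxg e

end
end
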